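/- Let ρ, θ, r, x, y, z, p be real numbers with p > 0, x, y, z ≥ 0, x + py > 0, x + pz > 0, y > z, and suppose ϑ := r + (θ − ζ)/(y − z) ≥ max{(ρ + p(ry+θ))/(x+py), (ρ + p(rz+ζ))/(x+pz)}. Then (ρ + p(ry+θ))/(x+py) ≥ (ρ + p(rz+ζ))/(x+pz). -/
import Mathlib

theorem switch_point_dominance (ρ θ ζ r x y z p : ℝ)
    (hp : 0 < p) (hx : 0 ≤ x) (hy : 0 ≤ y) (hz : 0 ≤ z)
    (hxpy : 0 < x + p * y) (hxpz : 0 < x + p * z) (hyz : z < y)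
    (h : r + (θ - ζ) / (y - z) ≥
      max ((ρ + p * (r * y + θ)) / (x + p * y)) ((ρ + p * (r * z + ζ)) / (x + p * z))) :
    (ρ + p * (r * y + θ)) / (x + p * y) ≥ (ρ + p * (r * z + ζ)) / (x + p * z) := by
  have hyz' : 0 < y - z := by linarith
  have h2 : (ρ + p * (r * z + ζ)) / (x + p * z) ≤ r + (θ - ζ) / (y - z) :=
    le_trans (le_max_right _ _) h
  have h3 : ρ + p * (r * z + ζ) ≤ (r + (θ - ζ) / (y - z)) * (x + p * z) :=
    (div_le_iff₀ hxpz).mp h2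
  have h4 : (θ - ζ) / (y - z) * (y - z) = θ - ζ := div_mul_cancel₀ _ (ne_of_gt hyz')
  set q := (θ - ζ) / (y - z) with hq
  have hθ : θ = ζ + q * (y - z) := by linarith [h4]
  rw [ge_iff_le, div_le_div_iff₀ hxpz hxpy, hθ]
  nlinarith [mul_le_mul_of_nonneg_left h3 (le_of_lt (mul_pos hp hyz'))]
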